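/- arXiv:0811.0652 — 3 statements merged into one kernel-verified Lean document; each statement's English description precedes it below -/
import Mathlib

section
/- Let A be a commutative ring of prime characteristic p in which the map a ↦ a^p − a is surjective. Then for every n ≥ 1, the map id − W_n(φ) : W_n(A) → W_n(A) is surjective, where W_n(φ) is the ring endomorphism of truncated Witt vectors induced functorially by the Frobenius endomorphism φ(a) = a^p of A. -/
open WittVector TruncatedWittVector

section Aux

variable (p : ℕ) [hp : Fact p.Prime] (A : Type*) [CommRing A]

private lemma aux_iterVer_coeff_lt (x : WittVector p A) :
    ∀ {n i : ℕ}, i < n → ((WittVector.verschiebung)^[n] x).coeff i = 0 := by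
  intro n
  induction n with
  | zero => intro i h; omega
  | succ n ih =>
    intro i h
    rw [Function.iterate_succ_apply']
    match i with
    | 0 => exact WittVector.verschiebung_coeff_zero _
    | Nat.succ j =>
      rw [WittVector.verschiebung_coeff_succ]
      exact ih (by omega)

private lemma aux_iterVer_sub (n : ℕ) (x y : WittVector p A) :
    (WittVector.verschiebung)^[n] (x - y)
      = (WittVector.verschiebung)^[n] x - (WittVector.verschiebung)^[n] y := by
  induction n with
  | zero => simp
  | succ n ih => simp [Function.iterate_succ_apply', ih, map_sub]

variable [CharP A p]

private lemma aux_mk_pow_eq (m : ℕ) (u : WittVector p A) :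
    (TruncatedWittVector.mk p fun i => (WittVector.truncate m u).coeff i ^ p)
      = WittVector.truncate m (WittVector.map (frobenius A p) u) := by
  apply TruncatedWittVector.ext
  intro i
  simp [WittVector.coeff_truncate, WittVector.map_coeff, frobenius_def,
    TruncatedWittVector.coeff_mk]

/-- Coordinatewise `p`-th power, as a function. -/
private noncomputable def frobTFun (m : ℕ) (x : TruncatedWittVector p m A) :
    TruncatedWittVector p m A :=
  TruncatedWittVector.mk p fun i => x.coeff i ^ p

private lemma frobTFun_truncate (m : ℕ) (u : WittVector p A) :
    frobTFun p A m (WittVector.truncate m u)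
      = WittVector.truncate m (WittVector.map (frobenius A p) u) :=
  aux_mk_pow_eq p A m u

/-- Coordinatewise `p`-th power as a ring endomorphism of truncated Witt vectors. -/
private noncomputable def frobT (m : ℕ) :
    TruncatedWittVector p m A →+* TruncatedWittVector p m A where
  toFun := frobTFun p A m
  map_one' := by
    have h : (1 : TruncatedWittVector p m A) = WittVector.truncate m 1 := (map_one _).symm
    rw [h, frobTFun_truncate, map_one, map_one]
  map_mul' := fun x y => by
    obtain ⟨u, hu⟩ := WittVector.truncate_surjective p m A x
    obtain ⟨v, hv⟩ := WittVector.truncate_surjective p m A y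
    rw [← hu, ← hv, ← map_mul, frobTFun_truncate, frobTFun_truncate, frobTFun_truncate,
      map_mul, map_mul]
  map_zero' := by
    have h : (0 : TruncatedWittVector p m A) = WittVector.truncate m 0 := (map_zero _).symm
    rw [h, frobTFun_truncate, map_zero, map_zero]
  map_add' := fun x y => by
    obtain ⟨u, hu⟩ := WittVector.truncate_surjective p m A x
    obtain ⟨v, hv⟩ := WittVector.truncate_surjective p m A y
    rw [← hu, ← hv, ← map_add, frobTFun_truncate, frobTFun_truncate, frobTFun_truncate,
      map_add, map_add]

private lemma frobT_coeff (m : ℕ) (x : TruncatedWittVector p m A) (i : Fin m) :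
    (frobT p A m x).coeff i = x.coeff i ^ p :=
  TruncatedWittVector.coeff_mk _ _

end Aux

/-- If the Artin–Schreier map is surjective on a commutative ring `A` of
characteristic `p`, then `id - Wₙ(φ)` is surjective on the truncated Witt
vectors, where `Wₙ(φ)` is the ring endomorphism induced by the Frobenius
`φ(a) = a ^ p` (i.e. acting coordinatewise by `p`-th powers). -/
theorem id_sub_wittFrobenius_surjective
    (p : ℕ) [Fact p.Prime] (A : Type*) [CommRing A] [CharP A p]
    (hAS : Function.Surjective (fun a : A => a ^ p - a))
    (n : ℕ) (hn : 1 ≤ n)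
    (Φ : TruncatedWittVector p n A →+* TruncatedWittVector p n A)
    (hΦ : ∀ (x : TruncatedWittVector p n A) (i : Fin n),
      (Φ x).coeff i = x.coeff i ^ p) :
    Function.Surjective (fun x : TruncatedWittVector p n A => x - Φ x) := by
  clear hn
  revert Φ
  induction n with
  | zero =>
    intro Φ hΦ y
    exact ⟨0, TruncatedWittVector.ext fun i => i.elim0⟩
  | succ n ih =>
    intro Φ hΦ y
    have h1 : n ≤ n + 1 := Nat.le_succ n
    -- inductive hypothesis applied to the truncation of y
    obtain ⟨x', hx'⟩ := ih (frobT p A n) (frobT_coeff p A n)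
      (TruncatedWittVector.truncate h1 y)
    obtain ⟨w, rfl⟩ := WittVector.truncate_surjective p n A x'
    set x : TruncatedWittVector p (n + 1) A := WittVector.truncate (n + 1) w with hx
    have hxt : TruncatedWittVector.truncate h1 x = WittVector.truncate n w := by
      rw [hx, truncate_wittVector_truncate]
    -- Φ commutes with truncation (both are coordinatewise p-th powers)
    have hΦt : ∀ u : TruncatedWittVector p (n + 1) A,
        TruncatedWittVector.truncate h1 (Φ u) = frobT p A n (TruncatedWittVector.truncate h1 u) := by
      intro u
      apply TruncatedWittVector.ext
      intro i
      rw [TruncatedWittVector.coeff_truncate, hΦ, frobT_coeff, TruncatedWittVector.coeff_truncate]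
    set d : TruncatedWittVector p (n + 1) A := y - (x - Φ x) with hd
    have hx2 : WittVector.truncate n w - frobT p A n (WittVector.truncate n w)
        = TruncatedWittVector.truncate h1 y := hx'
    have hdt : TruncatedWittVector.truncate h1 d = 0 := by
      rw [hd, map_sub, map_sub, hΦt, hxt, hx2, sub_self]
    have hdc : ∀ i : Fin (n + 1), (i : ℕ) < n → d.coeff i = 0 := by
      intro i hi
      have : d.coeff (Fin.castLE h1 ⟨(i : ℕ), hi⟩) = 0 := by
        rw [← TruncatedWittVector.coeff_truncate, hdt]
        simp
      simpa [Fin.ext_iff] using this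
    set a : A := d.coeff (Fin.last n) with ha
    obtain ⟨c, hc⟩ := hAS (-a)
    simp only at hc
    -- the "Verschiebung^n then truncate" map
    set g : WittVector p A → TruncatedWittVector p (n + 1) A :=
      fun u => WittVector.truncate (n + 1) ((WittVector.verschiebung)^[n] u) with hg
    have hgc : ∀ (u : WittVector p A) (i : Fin (n + 1)),
        (g u).coeff i = if (i : ℕ) = n then u.coeff 0 else 0 := by
      intro u i
      rw [hg]
      rw [WittVector.coeff_truncate]
      rcases Nat.lt_or_ge (i : ℕ) n with h | h
      · rw [aux_iterVer_coeff_lt p A u h, if_neg (by omega)]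
      · have hin : (i : ℕ) = n := by omega
        rw [if_pos hin, hin]
        simpa using WittVector.iterate_verschiebung_coeff u n 0
    set z : TruncatedWittVector p (n + 1) A := g (WittVector.mk p fun _ => c) with hz
    have hΦz : Φ z = g (WittVector.mk p fun _ => c ^ p) := by
      apply TruncatedWittVector.ext
      intro i
      rw [hΦ, hgc, hgc]
      rcases eq_or_ne (i : ℕ) n with h | h
      · simp [h, WittVector.coeff_mk]
      · simp [h, zero_pow (Fact.out : p.Prime).ne_zero]
    have hzd : z - Φ z = d := by
      rw [hΦz, hz, hg]
      simp only
      rw [← map_sub, ← aux_iterVer_sub]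
      apply TruncatedWittVector.ext
      intro i
      have : ((WittVector.mk p fun _ => c) - WittVector.mk p fun _ => c ^ p).coeff 0
          = c - c ^ p := by
        have := map_sub (WittVector.constantCoeff (p := p) (R := A))
          (WittVector.mk p fun _ => c) (WittVector.mk p fun _ => c ^ p)
        simpa [WittVector.coeff_mk] using this
      rw [show WittVector.truncate (n + 1)
            ((WittVector.verschiebung)^[n]
              ((WittVector.mk p fun _ => c) - WittVector.mk p fun _ => c ^ p))
          = g ((WittVector.mk p fun _ => c) - WittVector.mk p fun _ => c ^ p) from rfl, hgc, this]
      rcases eq_or_ne (i : ℕ) n with h | h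
      · have : i = Fin.last n := by simpa [Fin.ext_iff] using h
        rw [if_pos h, this, ← ha]
        linear_combination -hc
      · rw [if_neg h, hdc i (by omega)]
    refine ⟨x + z, ?_⟩
    simp only [map_add]
    calc x + z - (Φ x + Φ z) = (x - Φ x) + (z - Φ z) := by ring
    _ = (x - Φ x) + d := by rw [hzd]
    _ = y := by rw [hd]; ring
end

section
/- Let A be a strictly henselian noetherian local ring of prime characteristic p whose residue field is an integral domain extension of F_p (e.g. any strictly henselian noetherian local F_p-algebra). Then for every n ≥ 1 there is a short exact sequence of abelian groups 0 → Z/p^n Z → W_n(A) → W_n(A) → 0, where the first map is induced by the unit map W_n(F_p) → W_n(A) and the second map is id − W_n(φ). -/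
open Polynomial IsLocalRing

section Aux

variable (p : ℕ) [Fact p.Prime]

/-- Solvability of the Artin–Schreier equation `a - a^p = c` in a henselian local
ring of characteristic `p` with separably closed residue field. -/
lemma witt_as_artin_schreier_surj (A : Type*) [CommRing A] [HenselianLocalRing A]
    [CharP A p] [IsSepClosed (ResidueField A)] (c : A) :
    ∃ a : A, a - a ^ p = c := by
  have hp1 : 1 < p := (Fact.out : p.Prime).one_lt
  have hp1' : ((1 : ℕ) : WithBot ℕ) < (p : WithBot ℕ) := by exact_mod_cast hp1
  set f : A[X] := X ^ p - X + C c with hf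
  have hfeq : f = X ^ p + (C c - X) := by rw [hf]; ring
  have hdeglt : (C c - X : A[X]).degree < (p : WithBot ℕ) := by
    refine lt_of_le_of_lt (degree_sub_le _ _) ?_
    rw [degree_X]
    exact max_lt (lt_of_le_of_lt degree_C_le (lt_trans (by norm_num) hp1')) hp1'
  have hmonic : f.Monic := by
    rw [hfeq]
    exact monic_X_pow_add hdeglt
  have hdegf : f.degree = (p : WithBot ℕ) := by
    rw [hfeq]
    rw [degree_add_eq_left_of_degree_lt (by rwa [degree_X_pow])]
    exact degree_X_pow p
  have hder : derivative f = -1 := by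
    rw [hf]
    simp [derivative_X_pow, CharP.cast_eq_zero A p]
  -- the residue polynomial
  set fbar : (ResidueField A)[X] := f.map (residue A) with hfbar
  have hderbar : derivative fbar = -1 := by
    rw [hfbar, derivative_map, hder]
    simp
  have hdegbar : fbar.degree ≠ 0 := by
    rw [hfbar, hmonic.degree_map, hdegf]
    exact_mod_cast (by omega : p ≠ 0)
  have hsep : fbar.Separable := ⟨0, -1, by rw [hderbar]; ring⟩
  obtain ⟨β, hβ⟩ := IsSepClosed.exists_root fbar hdegbar hsep
  obtain ⟨a₀, ha₀⟩ := IsLocalRing.residue_surjective (R := A) β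
  have hmem : f.eval a₀ ∈ maximalIdeal A := by
    have h1 : residue A (f.eval a₀) = 0 := by
      have h2 : fbar.eval (residue A a₀) = residue A (f.eval a₀) := by
        rw [hfbar, eval_map, eval₂_hom]
      rw [← h2, ha₀]
      exact hβ
    exact Ideal.Quotient.eq_zero_iff_mem.mp h1
  have hunit : IsUnit (f.derivative.eval a₀) := by
    rw [hder]
    simp
  obtain ⟨a, haroot, -⟩ := HenselianLocalRing.is_henselian f hmonic a₀ hmem hunit
  refine ⟨a, ?_⟩
  have : a ^ p - a + c = 0 := by
    have := haroot
    simpa [hf, IsRoot] using this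
  linear_combination -this

/-- In a local ring of characteristic `p`, any root of `a^p = a` comes from `ZMod p`. -/
lemma witt_as_fixed_point_mem (A : Type*) [CommRing A] [IsLocalRing A] [CharP A p]
    (a : A) (ha : a ^ p = a) :
    ∃ c : ZMod p, (ZMod.castHom (dvd_refl p) A) c = a := by
  have hp1 : 1 < p := (Fact.out : p.Prime).one_lt
  set ψ : ZMod p →+* A := ZMod.castHom (dvd_refl p) A with hψ
  -- the product identity ∏ (a - ψ c) = a ^ p - a = 0
  have hq : Fintype.card (ZMod p) = p := ZMod.card p
  have hmonic : (X ^ p - X : (ZMod p)[X]).Monic := by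
    apply monic_X_pow_sub
    rw [degree_X]
    exact_mod_cast hp1
  have hroots : (X ^ p - X : (ZMod p)[X]).roots = Finset.univ.val := by
    have := FiniteField.roots_X_pow_card_sub_X (ZMod p)
    rwa [hq] at this
  have hndeg : (X ^ p - X : (ZMod p)[X]).natDegree = p :=
    FiniteField.X_pow_card_sub_X_natDegree_eq (ZMod p) hp1
  have hprod : (Multiset.map (fun c => X - C c) (X ^ p - X : (ZMod p)[X]).roots).prod
      = X ^ p - X := by
    apply prod_multiset_X_sub_C_of_monic_of_roots_card_eq hmonic
    rw [hroots, hndeg]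
    exact hq
  have h0 : ∏ c : ZMod p, (a - ψ c) = 0 := by
    have h1 := congrArg (Polynomial.eval₂RingHom ψ a) hprod
    rw [map_multiset_prod] at h1
    rw [Multiset.map_map, hroots] at h1
    simp only [Function.comp, coe_eval₂RingHom, eval₂_sub, eval₂_X, eval₂_C,
      eval₂_X_pow] at h1
    rw [ha, sub_self] at h1
    rw [← h1, Finset.prod_eq_multiset_prod]
  -- some factor is a nonunit
  have hex : ∃ c : ZMod p, ¬IsUnit (a - ψ c) := by
    by_contra h
    push_neg at h
    have : IsUnit (∏ c : ZMod p, (a - ψ c)) :=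
      Finset.prod_induction _ IsUnit (fun x y hx hy => hx.mul hy) isUnit_one
        (fun x _ => h x)
    rw [h0] at this
    exact not_isUnit_zero this
  obtain ⟨c, hc⟩ := hex
  have hcm : a - ψ c ∈ maximalIdeal A := hc
  -- all other factors are units
  have hu : ∀ c' ∈ Finset.univ.erase c, IsUnit (a - ψ c') := by
    intro c' hc'
    have hne : c - c' ≠ 0 := sub_ne_zero.mpr (Finset.ne_of_mem_erase hc').symm
    have hunit : IsUnit (ψ (c - c')) := (isUnit_iff_ne_zero.mpr hne).map ψ
    by_contra hnu
    have hm' : a - ψ c' ∈ maximalIdeal A := hnu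
    have : ψ (c - c') ∈ maximalIdeal A := by
      have : ψ (c - c') = (a - ψ c') - (a - ψ c) := by rw [map_sub]; ring
      rw [this]
      exact Ideal.sub_mem _ hm' hcm
    exact this hunit
  have huprod : IsUnit (∏ c' ∈ Finset.univ.erase c, (a - ψ c')) :=
    Finset.prod_induction _ IsUnit (fun x y hx hy => hx.mul hy) isUnit_one hu
  have hsplit : (a - ψ c) * ∏ c' ∈ Finset.univ.erase c, (a - ψ c') = 0 :=
    (Finset.mul_prod_erase Finset.univ (fun c' => a - ψ c') (Finset.mem_univ c)).trans h0
  have : a - ψ c = 0 := (IsUnit.mul_left_eq_zero huprod).mp hsplit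
  exact ⟨c, by linear_combination -this⟩

lemma witt_as_iterate_verschiebung_coeff_lt (R : Type*) [CommRing R]
    (x : WittVector p R) (m : ℕ) : ∀ i < m, (WittVector.verschiebung^[m] x).coeff i = 0 := by
  induction m with
  | zero => intro i hi; omega
  | succ m ih =>
    intro i hi
    rw [Function.iterate_succ_apply']
    match i with
    | 0 => exact WittVector.verschiebung_coeff_zero _
    | j + 1 =>
      rw [WittVector.verschiebung_coeff_succ]
      exact ih j (by omega)

lemma witt_as_iterate_verschiebung_sub (R : Type*) [CommRing R]
    (x y : WittVector p R) (m : ℕ) :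
    WittVector.verschiebung^[m] (x - y)
      = WittVector.verschiebung^[m] x - WittVector.verschiebung^[m] y := by
  induction m with
  | zero => simp
  | succ m ih =>
    rw [Function.iterate_succ_apply', Function.iterate_succ_apply',
      Function.iterate_succ_apply', ih, map_sub]

/-- Surjectivity of `1 - F` on truncated Witt vectors, at the level of `𝕎 A`. -/
lemma witt_as_key_surj (A : Type*) [CommRing A] [HenselianLocalRing A]
    [CharP A p] [IsSepClosed (ResidueField A)] (b : WittVector p A) (m : ℕ) :
    ∃ x : WittVector p A,
      WittVector.truncate m (x - WittVector.frobenius x) = WittVector.truncate m b := by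
  induction m with
  | zero => exact ⟨0, TruncatedWittVector.ext fun i => i.elim0⟩
  | succ m ih =>
    obtain ⟨x₀, hx₀⟩ := ih
    set r : WittVector p A := b - (x₀ - WittVector.frobenius x₀) with hr
    have hrc : ∀ i < m, r.coeff i = 0 := by
      intro i hi
      have h1 : WittVector.truncate m r = 0 := by
        rw [hr, map_sub, hx₀, sub_self]
      have h2 := congrArg (fun v => TruncatedWittVector.coeff ⟨i, hi⟩ v) h1
      simpa [WittVector.coeff_truncate] using h2
    obtain ⟨a, ha⟩ := witt_as_artin_schreier_surj p A (r.coeff m)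
    set xh : WittVector p A := WittVector.mk p (fun i => if i = 0 then a else 0) with hxh
    have hxh0 : xh.coeff 0 = a := by rw [hxh, WittVector.coeff_mk]; simp
    set y : WittVector p A := WittVector.verschiebung^[m] xh with hy
    have hFy : WittVector.frobenius y = WittVector.verschiebung^[m] (WittVector.frobenius xh) := by
      rw [hy]
      exact (WittVector.verschiebung_frobenius_comm (R := A)).symm.iterate_right m xh
    have hsub : y - WittVector.frobenius y
        = WittVector.verschiebung^[m] (xh - WittVector.frobenius xh) := by
      rw [hFy, hy, witt_as_iterate_verschiebung_sub]
    have hc0 : (xh - WittVector.frobenius xh).coeff 0 = a - a ^ p := by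
      have h1 := map_sub (WittVector.constantCoeff (p := p) (R := A)) xh
        (WittVector.frobenius xh)
      simp only [WittVector.constantCoeff_apply] at h1
      rw [h1, WittVector.coeff_frobenius_charP, hxh0]
    have key : WittVector.truncate (m + 1) (y - WittVector.frobenius y)
        = WittVector.truncate (m + 1) r := by
      apply TruncatedWittVector.ext
      intro i
      rw [WittVector.coeff_truncate, WittVector.coeff_truncate, hsub]
      rcases Nat.lt_or_ge i.val m with hlt | hge
      · rw [witt_as_iterate_verschiebung_coeff_lt p A _ m i.val hlt, hrc i.val hlt]
      · have him : (i : ℕ) = m := by omega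
        rw [him]
        have h3 := WittVector.iterate_verschiebung_coeff
          (x := xh - WittVector.frobenius xh) (n := m) (k := 0)
        rw [zero_add] at h3
        rw [h3, hc0, ha]
    refine ⟨x₀ + y, ?_⟩
    have hsplit : x₀ + y - WittVector.frobenius (x₀ + y)
        = (x₀ - WittVector.frobenius x₀) + (y - WittVector.frobenius y) := by
      rw [map_add]; ring
    rw [hsplit, map_add, key, hr]
    simp only [map_sub]
    ring

end Aux

/-- For a strictly henselian noetherian local ring `A` of characteristic `p`,
there is a short exact sequence `0 → ℤ/pⁿℤ → Wₙ(A) → Wₙ(A) → 0`, where the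
first map is induced by the unit map `Wₙ(𝔽_p) → Wₙ(A)` and the second map is
`id - Wₙ(φ)`, with `Wₙ(φ)` induced by the Frobenius `φ(a) = a ^ p`. -/
theorem witt_artin_schreier_exact_sequence
    (p : ℕ) [Fact p.Prime] (A : Type*) [CommRing A] [IsNoetherianRing A]
    [HenselianLocalRing A] [CharP A p]
    [IsSepClosed (IsLocalRing.ResidueField A)]
    (n : ℕ) (hn : 1 ≤ n)
    (Φ : TruncatedWittVector p n A →+* TruncatedWittVector p n A)
    (hΦ : ∀ (x : TruncatedWittVector p n A) (i : Fin n),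
      (Φ x).coeff i = x.coeff i ^ p)
    (Ψ : TruncatedWittVector p n (ZMod p) →+* TruncatedWittVector p n A)
    (hΨ : ∀ (x : TruncatedWittVector p n (ZMod p)) (i : Fin n),
      (Ψ x).coeff i = ZMod.castHom (dvd_refl p) A (x.coeff i)) :
    Function.Injective Ψ ∧
      Set.range Ψ = {x : TruncatedWittVector p n A | x - Φ x = 0} ∧
      Function.Surjective (fun x : TruncatedWittVector p n A => x - Φ x) ∧
      Nat.card (TruncatedWittVector p n (ZMod p)) = p ^ n := by
  refine ⟨?_, ?_, ?_, ?_⟩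
  · -- injectivity of Ψ
    intro x y h
    apply TruncatedWittVector.ext
    intro i
    apply ZMod.castHom_injective A
    rw [← hΨ x i, ← hΨ y i, h]
  · -- range of Ψ is the fixed-point set
    ext x
    simp only [Set.mem_range, Set.mem_setOf_eq, sub_eq_zero]
    constructor
    · rintro ⟨y, rfl⟩
      apply TruncatedWittVector.ext
      intro i
      rw [hΦ, hΨ, ← map_pow, ZMod.pow_card]
    · intro hx
      have hfix : ∀ i : Fin n, (x.coeff i) ^ p = x.coeff i := by
        intro i
        have h2 := congrArg (fun v => TruncatedWittVector.coeff i v) hx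
        rw [hΦ] at h2
        exact h2.symm
      choose c hc using fun i : Fin n =>
        witt_as_fixed_point_mem p A (x.coeff i) (hfix i)
      refine ⟨TruncatedWittVector.mk p c, ?_⟩
      apply TruncatedWittVector.ext
      intro i
      rw [hΨ, TruncatedWittVector.coeff_mk, hc]
  · -- surjectivity of 1 - Φ
    have hΦt : ∀ w : WittVector p A,
        Φ (WittVector.truncate n w) = WittVector.truncate n (WittVector.frobenius w) := by
      intro w
      apply TruncatedWittVector.ext
      intro i
      rw [hΦ, WittVector.coeff_truncate, WittVector.coeff_truncate,
        WittVector.coeff_frobenius_charP]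
    intro b'
    obtain ⟨b, rfl⟩ := WittVector.truncate_surjective p n A b'
    obtain ⟨x, hx⟩ := witt_as_key_surj p A b n
    refine ⟨WittVector.truncate n x, ?_⟩
    simp only
    rw [hΦt, ← map_sub, hx]
  · -- cardinality
    have e : TruncatedWittVector p n (ZMod p) ≃ (Fin n → ZMod p) :=
      { toFun := fun x i => x.coeff i
        invFun := TruncatedWittVector.mk p
        left_inv := fun x => TruncatedWittVector.mk_coeff x
        right_inv := fun f => funext fun i => TruncatedWittVector.coeff_mk f i }
    rw [Nat.card_congr e, Nat.card_eq_fintype_card, Fintype.card_fun, ZMod.card,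
      Fintype.card_fin]
end

section
/- Let A be a commutative local ring of prime characteristic p such that the Artin–Schreier map a ↦ a^p − a is surjective on A. Then for every n ≥ 2, the map R − F : W_n(A) → W_{n−1}(A), the difference of the restriction and Frobenius operators on truncated Witt vectors, is surjective. -/
open WittVector

private lemma iterate_verschiebung_sub {p : ℕ} [Fact p.Prime] {A : Type*} [CommRing A]
    (m : ℕ) (a b : WittVector p A) :
    verschiebung^[m] (a - b) = verschiebung^[m] a - verschiebung^[m] b := by
  induction m with
  | zero => rfl
  | succ k ih =>
      simp only [Function.iterate_succ_apply', ih, map_sub]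

private lemma iterate_verschiebung_coeff_lt {p : ℕ} [Fact p.Prime] {A : Type*} [CommRing A]
    (m : ℕ) (x : WittVector p A) {i : ℕ} (hi : i < m) :
    (verschiebung^[m] x).coeff i = 0 := by
  induction m generalizing i with
  | zero => omega
  | succ k ih =>
      rw [Function.iterate_succ_apply']
      cases i with
      | zero => exact verschiebung_coeff_zero _
      | succ j => rw [verschiebung_coeff_succ]; exact ih (by omega)

private lemma map_iterate_verschiebung {p : ℕ} [Fact p.Prime] {A : Type*} [CommRing A]
    (φ : A →+* A) (m : ℕ) (t : WittVector p A) :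
    WittVector.map φ (verschiebung^[m] t) = verschiebung^[m] (WittVector.map φ t) := by
  induction m with
  | zero => rfl
  | succ k ih => simp only [Function.iterate_succ_apply', map_verschiebung, ih]

private lemma key_approx {p : ℕ} [Fact p.Prime] {A : Type*} [CommRing A] [CharP A p]
    (hAS : Function.Surjective (fun a : A => a ^ p - a)) (m : ℕ) (y : WittVector p A) :
    ∃ x : WittVector p A,
      WittVector.truncate m (x - WittVector.map (_root_.frobenius A p) x) =
        WittVector.truncate m y := by
  induction m with
  | zero =>
      exact ⟨0, by ext i; exact i.elim0⟩
  | succ m ih =>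
      obtain ⟨x, hx⟩ := ih
      set φ : A →+* A := _root_.frobenius A p with hφ
      set d : WittVector p A := y - (x - WittVector.map φ x) with hd
      have hdlow : ∀ i < m, d.coeff i = 0 := by
        intro i hi
        have h0 : WittVector.truncate m d = 0 := by
          rw [hd, map_sub, hx, sub_self]
        have := congrArg (fun z => TruncatedWittVector.coeff (⟨i, hi⟩ : Fin m) z) h0
        simpa [WittVector.coeff_truncate] using this
      obtain ⟨b, hb⟩ := hAS (-(d.coeff m))
      have hb' : b - b ^ p = d.coeff m := by
        have h : b ^ p - b = -(d.coeff m) := hb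
        linear_combination -h
      set t : WittVector p A := WittVector.mk p (fun i => if i = 0 then b else 0) with ht
      have ht0 : t.coeff 0 = b := by rfl
      set c : WittVector p A := verschiebung^[m] t with hc
      refine ⟨x + c, ?_⟩
      have hmapc : WittVector.map φ c = verschiebung^[m] (WittVector.map φ t) :=
        map_iterate_verschiebung φ m t
      -- the difference between the new error and `d`
      have hdiff : (x + c - WittVector.map φ (x + c)) - y =
          verschiebung^[m] ((t - WittVector.map φ t) - d.shift m) := by
        have hdV : d = verschiebung^[m] (d.shift m) :=
          eq_iterate_verschiebung hdlow
        have : (x + c - WittVector.map φ (x + c)) - y =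
            (c - WittVector.map φ c) - d := by
          rw [hd]; ring_nf; rw [map_add]; ring
        rw [this, hmapc, hc, ← iterate_verschiebung_sub]
        conv_lhs => rw [hdV]
        rw [← iterate_verschiebung_sub]
      have hcoeffm : ((t - WittVector.map φ t) - d.shift m).coeff 0 = 0 := by
        have : ∀ a b : WittVector p A, (a - b).coeff 0 = a.coeff 0 - b.coeff 0 := fun a b => by
          simpa using (WittVector.constantCoeff (p := p) (R := A)).map_sub a b
        rw [this, this, ht0, WittVector.map_coeff, ht0, WittVector.shift_coeff]
        simp only [Nat.add_zero]
        rw [hφ]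
        simp only [frobenius_def]
        rw [hb']
        ring
      -- now conclude the truncation equality
      have hzero : WittVector.truncate (m + 1)
          ((x + c - WittVector.map φ (x + c)) - y) = 0 := by
        rw [hdiff]
        ext i
        rw [WittVector.coeff_truncate, TruncatedWittVector.coeff_zero]
        rcases lt_or_eq_of_le (Nat.lt_succ_iff.mp i.2) with hi | hi
        · exact iterate_verschiebung_coeff_lt m _ hi
        · have := iterate_verschiebung_coeff (p := p)
            ((t - WittVector.map φ t) - d.shift m) m 0
          rw [hcoeffm] at this
          simpa [hi] using this
      have h' : WittVector.truncate (m + 1) (x + c - WittVector.map φ (x + c)) -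
          WittVector.truncate (m + 1) y = 0 := by
        rw [← map_sub]; exact hzero
      exact sub_eq_zero.mp h'

/-- If the Artin–Schreier map is surjective on a commutative local ring `A`
of characteristic `p`, then `R - F : Wₙ(A) → Wₙ₋₁(A)`, the difference of the
restriction and the Frobenius on truncated Witt vectors, is surjective. -/
theorem restriction_sub_frobenius_surjective
    (p : ℕ) [Fact p.Prime] (A : Type*) [CommRing A] [IsLocalRing A] [CharP A p]
    (hAS : Function.Surjective (fun a : A => a ^ p - a))
    (n : ℕ) (hn : 2 ≤ n)
    (F : TruncatedWittVector p n A →+* TruncatedWittVector p (n - 1) A)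
    (hF : F.comp (WittVector.truncate n) =
      (WittVector.truncate (n - 1)).comp WittVector.frobenius) :
    Function.Surjective (fun x : TruncatedWittVector p n A =>
      TruncatedWittVector.truncate (Nat.sub_le n 1) x - F x) := by
  intro y
  obtain ⟨y0, rfl⟩ := WittVector.truncate_surjective (p := p) (n - 1) A y
  obtain ⟨x, hx⟩ := key_approx hAS (n - 1) y0
  refine ⟨WittVector.truncate n x, ?_⟩
  have h1 : TruncatedWittVector.truncate (Nat.sub_le n 1) (WittVector.truncate n x) =
      WittVector.truncate (n - 1) x :=
    TruncatedWittVector.truncate_wittVector_truncate _ _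
  have h2 : F (WittVector.truncate n x) =
      WittVector.truncate (n - 1) (WittVector.frobenius x) :=
    RingHom.congr_fun hF x
  simp only [h1, h2]
  rw [frobenius_eq_map_frobenius, ← map_sub, hx]
end
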